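/- arXiv:1910.03426 — 2 statements merged into one kernel-verified Lean document; each statement's English description precedes it below -/
import Mathlib

section
/- Saturation for tensor Colombeau estimates (local model): a net (T_ε) of smooth type (r,s) tensor fields on U ⊆ ℝⁿ is moderate (respectively negligible) if and only if for all smooth 1-forms θ¹,…,θʳ and smooth vector fields X₁,…,X_s on U, the net of scalar functions x ↦ T_ε(x)(θ¹(x),…,θʳ(x),X₁(x),…,X_s(x)) is moderate (respectively negligible) as a net of smooth functions. -/
/- STATEMENT 8: Saturation (local model): a net (T_ε) of smooth type (r,s) tensor
fields on an open U ⊆ ℝⁿ is moderate (respectively negligible) if and only if for all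
smooth 1-forms θ¹,…,θʳ and smooth vector fields X₁,…,X_s on U, the net of scalar
functions x ↦ T_ε(x)(θ¹(x),…,θʳ(x),X₁(x),…,X_s(x)) is moderate (respectively
negligible). -/

open MeasureTheory Filter Set Topology

abbrev Rn (n : ℕ) := Fin n → ℝ

abbrev Tens (n r s : ℕ) := (Fin r → Fin n) → (Fin s → Fin n) → ℝ

def Moderate {n : ℕ} {E : Type*} [NormedAddCommGroup E] [NormedSpace ℝ E]
    (U : Set (Rn n)) (f : ℝ → Rn n → E) : Prop :=
  ∀ K : Set (Rn n), IsCompact K → K ⊆ U → ∀ k : ℕ,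
    ∃ N : ℕ, ∃ C > (0:ℝ), ∃ ε₀ > (0:ℝ), ∀ ε : ℝ, 0 < ε → ε < ε₀ → ∀ x ∈ K,
      ‖iteratedFDerivWithin ℝ k (f ε) U x‖ ≤ C / ε ^ N

def Negligible {n : ℕ} {E : Type*} [NormedAddCommGroup E] [NormedSpace ℝ E]
    (U : Set (Rn n)) (f : ℝ → Rn n → E) : Prop :=
  ∀ K : Set (Rn n), IsCompact K → K ⊆ U → ∀ k : ℕ, ∀ m : ℕ,
    ∃ C > (0:ℝ), ∃ ε₀ > (0:ℝ), ∀ ε : ℝ, 0 < ε → ε < ε₀ → ∀ x ∈ K,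
      ‖iteratedFDerivWithin ℝ k (f ε) U x‖ ≤ C * ε ^ m

/-- The scalar net obtained by contracting a tensor net with 1-forms θ and vector
fields X (given by their components θ i x a, X j x a). -/
def contractScalar {n r s : ℕ} (T : ℝ → Rn n → Tens n r s)
    (θ : Fin r → Rn n → Rn n) (X : Fin s → Rn n → Rn n) : ℝ → Rn n → ℝ :=
  fun ε x => ∑ i : Fin r → Fin n, ∑ j : Fin s → Fin n,
    T ε x i j * (∏ k : Fin r, θ k x (i k)) * (∏ k : Fin s, X k x (j k))

/-! ### Uniformization helpers -/

lemma unif_mod {ι : Type*} (t : Finset ι) (P : ι → ℝ → ℝ → Prop)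
    (hmono : ∀ i ∈ t, ∀ (ε b b' : ℝ), b ≤ b' → P i ε b → P i ε b')
    (h : ∀ i ∈ t, ∃ N : ℕ, ∃ C > (0:ℝ), ∃ ε₀ > (0:ℝ), ∀ ε : ℝ, 0 < ε → ε < ε₀ →
      P i ε (C / ε ^ N)) :
    ∃ N : ℕ, ∃ C > (0:ℝ), ∃ ε₀ > (0:ℝ), ε₀ ≤ 1 ∧
      ∀ ε : ℝ, 0 < ε → ε < ε₀ → ∀ i ∈ t, P i ε (C / ε ^ N) := by
  rcases t.eq_empty_or_nonempty with rfl | hne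
  · exact ⟨0, 1, one_pos, 1, one_pos, le_refl 1, by simp⟩
  choose N C hC ε₀ hε₀ hP using fun i : t => h i i.2
  have hne' : t.attach.Nonempty := hne.attach
  refine ⟨t.attach.sup N, ∑ i ∈ t.attach, C i, Finset.sum_pos (fun i _ => hC i) hne',
    min 1 (t.attach.inf' hne' ε₀), lt_min one_pos ?_, min_le_left _ _, ?_⟩
  · exact (Finset.lt_inf'_iff hne').2 fun i _ => hε₀ i
  intro ε hε hεlt i hi
  have hε1 : ε ≤ 1 := (lt_of_lt_of_le hεlt (min_le_left _ _)).le
  set i' : {x // x ∈ t} := ⟨i, hi⟩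
  have h1 : ε < ε₀ i' :=
    lt_of_lt_of_le hεlt ((min_le_right _ _).trans (Finset.inf'_le _ (Finset.mem_attach _ i')))
  refine hmono i hi ε _ _ ?_ (hP i' ε hε h1)
  have hCle : C i' ≤ ∑ j ∈ t.attach, C j :=
    Finset.single_le_sum (fun j _ => (hC j).le) (Finset.mem_attach _ i')
  have hpow : ε ^ t.attach.sup N ≤ ε ^ N i' :=
    pow_le_pow_of_le_one hε.le hε1 (Finset.le_sup (Finset.mem_attach _ i'))
  exact div_le_div₀ (Finset.sum_nonneg fun j _ => (hC j).le) hCle (pow_pos hε _) hpow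

lemma unif_neg {ι : Type*} (t : Finset ι) (m : ℕ) (P : ι → ℝ → ℝ → Prop)
    (hmono : ∀ i ∈ t, ∀ (ε b b' : ℝ), b ≤ b' → P i ε b → P i ε b')
    (h : ∀ i ∈ t, ∃ C > (0:ℝ), ∃ ε₀ > (0:ℝ), ∀ ε : ℝ, 0 < ε → ε < ε₀ →
      P i ε (C * ε ^ m)) :
    ∃ C > (0:ℝ), ∃ ε₀ > (0:ℝ), ε₀ ≤ 1 ∧
      ∀ ε : ℝ, 0 < ε → ε < ε₀ → ∀ i ∈ t, P i ε (C * ε ^ m) := by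
  rcases t.eq_empty_or_nonempty with rfl | hne
  · exact ⟨1, one_pos, 1, one_pos, le_refl 1, by simp⟩
  choose C hC ε₀ hε₀ hP using fun i : t => h i i.2
  have hne' : t.attach.Nonempty := hne.attach
  refine ⟨∑ i ∈ t.attach, C i, Finset.sum_pos (fun i _ => hC i) hne',
    min 1 (t.attach.inf' hne' ε₀), lt_min one_pos ?_, min_le_left _ _, ?_⟩
  · exact (Finset.lt_inf'_iff hne').2 fun i _ => hε₀ i
  intro ε hε hεlt i hi
  set i' : {x // x ∈ t} := ⟨i, hi⟩
  have h1 : ε < ε₀ i' :=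
    lt_of_lt_of_le hεlt ((min_le_right _ _).trans (Finset.inf'_le _ (Finset.mem_attach _ i')))
  refine hmono i hi ε _ _ ?_ (hP i' ε hε h1)
  have hCle : C i' ≤ ∑ j ∈ t.attach, C j :=
    Finset.single_le_sum (fun j _ => (hC j).le) (Finset.mem_attach _ i')
  exact mul_le_mul_of_nonneg_right hCle (pow_nonneg hε.le m)

/-! ### Bounds for fixed smooth functions -/

lemma smooth_bound {n : ℕ} {U : Set (Rn n)} (hU : IsOpen U) {g : Rn n → ℝ}
    (hg : ContDiffOn ℝ (⊤ : ℕ∞) g U) {K : Set (Rn n)} (hK : IsCompact K) (hKU : K ⊆ U) (k : ℕ) :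
    ∃ D > (0:ℝ), ∀ i ≤ k, ∀ x ∈ K, ‖iteratedFDerivWithin ℝ i g U x‖ ≤ D := by
  have hbd : ∀ i : ℕ, ∃ D : ℝ, ∀ x ∈ K, ‖iteratedFDerivWithin ℝ i g U x‖ ≤ D := by
    intro i
    exact hK.exists_bound_of_continuousOn
      ((hg.continuousOn_iteratedFDerivWithin (by exact_mod_cast le_top)
        hU.uniqueDiffOn).mono hKU)
  choose D hD using hbd
  refine ⟨1 + ∑ i ∈ Finset.range (k+1), |D i|, by positivity, ?_⟩
  intro i hi x hx
  have h1 : ‖iteratedFDerivWithin ℝ i g U x‖ ≤ |D i| := (hD i x hx).trans (le_abs_self _)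
  have h2 : |D i| ≤ ∑ j ∈ Finset.range (k+1), |D j| :=
    Finset.single_le_sum (f := fun j => |D j|) (fun j _ => abs_nonneg _)
      (Finset.mem_range.2 (Nat.lt_succ_of_le hi))
  linarith

/-! ### Closure under multiplication by a fixed smooth function -/

lemma Moderate.mul_smooth {n : ℕ} {U : Set (Rn n)} (hU : IsOpen U)
    {f : ℝ → Rn n → ℝ} {g : Rn n → ℝ}
    (hfs : ∀ ε ∈ Ioc (0:ℝ) 1, ContDiffOn ℝ (⊤ : ℕ∞) (f ε) U) (hf : Moderate U f)
    (hg : ContDiffOn ℝ (⊤ : ℕ∞) g U) : Moderate U (fun ε x => f ε x * g x) := by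
  intro K hK hKU k
  obtain ⟨N, C, hC, ε₀, hε₀, hε₁, hbd⟩ := unif_mod (Finset.range (k+1))
    (fun i ε b => ∀ x ∈ K, ‖iteratedFDerivWithin ℝ i (f ε) U x‖ ≤ b)
    (fun i _ ε b b' hbb hP x hx => (hP x hx).trans hbb)
    (fun i _ => hf K hK hKU i)
  obtain ⟨D, hD, hgD⟩ := smooth_bound hU hg hK hKU k
  refine ⟨N, 2 ^ k * C * D, by positivity, ε₀, hε₀, ?_⟩
  intro ε hε hεlt x hx
  have hεmem : ε ∈ Ioc (0:ℝ) 1 := ⟨hε, (lt_of_lt_of_le hεlt hε₁).le⟩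
  have hfε := hfs ε hεmem
  calc ‖iteratedFDerivWithin ℝ k (fun y => f ε y * g y) U x‖
      ≤ ∑ i ∈ Finset.range (k+1), (k.choose i : ℝ) *
          ‖iteratedFDerivWithin ℝ i (f ε) U x‖ * ‖iteratedFDerivWithin ℝ (k - i) g U x‖ :=
        norm_iteratedFDerivWithin_mul_le hfε hg hU.uniqueDiffOn (hKU hx) (by exact_mod_cast le_top)
    _ ≤ ∑ i ∈ Finset.range (k+1), (k.choose i : ℝ) * (C / ε ^ N) * D := by
        refine Finset.sum_le_sum fun i hi => ?_
        have h1 := hbd ε hε hεlt i hi x hx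
        have h2 := hgD (k - i) (Nat.sub_le _ _) x hx
        have hC' : (0:ℝ) ≤ C / ε ^ N := by positivity
        gcongr
    _ = 2 ^ k * C * D / ε ^ N := by
        rw [← Finset.sum_mul, ← Finset.sum_mul]
        have hsum : ∑ i ∈ Finset.range (k+1), (k.choose i : ℝ) = 2 ^ k := by
          rw [← Nat.cast_sum, Nat.sum_range_choose]; push_cast; ring
        rw [hsum]; ring

lemma Negligible.mul_smooth {n : ℕ} {U : Set (Rn n)} (hU : IsOpen U)
    {f : ℝ → Rn n → ℝ} {g : Rn n → ℝ}
    (hfs : ∀ ε ∈ Ioc (0:ℝ) 1, ContDiffOn ℝ (⊤ : ℕ∞) (f ε) U) (hf : Negligible U f)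
    (hg : ContDiffOn ℝ (⊤ : ℕ∞) g U) : Negligible U (fun ε x => f ε x * g x) := by
  intro K hK hKU k m
  obtain ⟨C, hC, ε₀, hε₀, hε₁, hbd⟩ := unif_neg (Finset.range (k+1)) m
    (fun i ε b => ∀ x ∈ K, ‖iteratedFDerivWithin ℝ i (f ε) U x‖ ≤ b)
    (fun i _ ε b b' hbb hP x hx => (hP x hx).trans hbb)
    (fun i _ => hf K hK hKU i m)
  obtain ⟨D, hD, hgD⟩ := smooth_bound hU hg hK hKU k
  refine ⟨2 ^ k * C * D, by positivity, ε₀, hε₀, ?_⟩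
  intro ε hε hεlt x hx
  have hεmem : ε ∈ Ioc (0:ℝ) 1 := ⟨hε, (lt_of_lt_of_le hεlt hε₁).le⟩
  have hfε := hfs ε hεmem
  calc ‖iteratedFDerivWithin ℝ k (fun y => f ε y * g y) U x‖
      ≤ ∑ i ∈ Finset.range (k+1), (k.choose i : ℝ) *
          ‖iteratedFDerivWithin ℝ i (f ε) U x‖ * ‖iteratedFDerivWithin ℝ (k - i) g U x‖ :=
        norm_iteratedFDerivWithin_mul_le hfε hg hU.uniqueDiffOn (hKU hx) (by exact_mod_cast le_top)
    _ ≤ ∑ i ∈ Finset.range (k+1), (k.choose i : ℝ) * (C * ε ^ m) * D := by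
        refine Finset.sum_le_sum fun i hi => ?_
        have h1 := hbd ε hε hεlt i hi x hx
        have h2 := hgD (k - i) (Nat.sub_le _ _) x hx
        have hC' : (0:ℝ) ≤ C * ε ^ m := by positivity
        gcongr
    _ = 2 ^ k * C * D * ε ^ m := by
        rw [← Finset.sum_mul, ← Finset.sum_mul]
        have hsum : ∑ i ∈ Finset.range (k+1), (k.choose i : ℝ) = 2 ^ k := by
          rw [← Nat.cast_sum, Nat.sum_range_choose]; push_cast; ring
        rw [hsum]; ring

/-! ### Closure under finite sums -/

lemma Moderate.fin_sum {n : ℕ} {ι : Type*} {U : Set (Rn n)} (hU : IsOpen U) (t : Finset ι)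
    {f : ι → ℝ → Rn n → ℝ}
    (hfs : ∀ i ∈ t, ∀ ε ∈ Ioc (0:ℝ) 1, ContDiffOn ℝ (⊤ : ℕ∞) (f i ε) U)
    (hf : ∀ i ∈ t, Moderate U (f i)) :
    Moderate U (fun ε x => ∑ i ∈ t, f i ε x) := by
  intro K hK hKU k
  obtain ⟨N, C, hC, ε₀, hε₀, hε₁, hb⟩ := unif_mod t
    (fun i ε b => ∀ x ∈ K, ‖iteratedFDerivWithin ℝ k (f i ε) U x‖ ≤ b)
    (fun i _ ε b b' hbb hP x hx => (hP x hx).trans hbb)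
    (fun i hi => hf i hi K hK hKU k)
  refine ⟨N, (t.card + 1) * C, by positivity, ε₀, hε₀, ?_⟩
  intro ε hε hεlt x hx
  have hεmem : ε ∈ Ioc (0:ℝ) 1 := ⟨hε, (lt_of_lt_of_le hεlt hε₁).le⟩
  have heq : iteratedFDerivWithin ℝ k (fun y => ∑ i ∈ t, f i ε y) U x
      = ∑ i ∈ t, iteratedFDerivWithin ℝ k (f i ε) U x := by
    have := iteratedFDerivWithin_sum_apply (i := k) hU.uniqueDiffOn (hKU hx)
      (fun i hi => ((hfs i hi ε hεmem) x (hKU hx)).of_le (by exact_mod_cast le_top))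
    rwa [Finset.sum_fn] at this
  rw [heq]
  calc ‖∑ i ∈ t, iteratedFDerivWithin ℝ k (f i ε) U x‖
      ≤ ∑ i ∈ t, ‖iteratedFDerivWithin ℝ k (f i ε) U x‖ := norm_sum_le _ _
    _ ≤ ∑ _i ∈ t, C / ε ^ N := Finset.sum_le_sum fun i hi => hb ε hε hεlt i hi x hx
    _ = t.card * (C / ε ^ N) := by rw [Finset.sum_const, nsmul_eq_mul]
    _ ≤ (t.card + 1) * C / ε ^ N := by
        rw [mul_div_assoc]
        have h1 : (0:ℝ) ≤ C / ε ^ N := by positivity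
        nlinarith [h1]

lemma Negligible.fin_sum {n : ℕ} {ι : Type*} {U : Set (Rn n)} (hU : IsOpen U) (t : Finset ι)
    {f : ι → ℝ → Rn n → ℝ}
    (hfs : ∀ i ∈ t, ∀ ε ∈ Ioc (0:ℝ) 1, ContDiffOn ℝ (⊤ : ℕ∞) (f i ε) U)
    (hf : ∀ i ∈ t, Negligible U (f i)) :
    Negligible U (fun ε x => ∑ i ∈ t, f i ε x) := by
  intro K hK hKU k m
  obtain ⟨C, hC, ε₀, hε₀, hε₁, hb⟩ := unif_neg t m
    (fun i ε b => ∀ x ∈ K, ‖iteratedFDerivWithin ℝ k (f i ε) U x‖ ≤ b)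
    (fun i _ ε b b' hbb hP x hx => (hP x hx).trans hbb)
    (fun i hi => hf i hi K hK hKU k m)
  refine ⟨(t.card + 1) * C, by positivity, ε₀, hε₀, ?_⟩
  intro ε hε hεlt x hx
  have hεmem : ε ∈ Ioc (0:ℝ) 1 := ⟨hε, (lt_of_lt_of_le hεlt hε₁).le⟩
  have heq : iteratedFDerivWithin ℝ k (fun y => ∑ i ∈ t, f i ε y) U x
      = ∑ i ∈ t, iteratedFDerivWithin ℝ k (f i ε) U x := by
    have := iteratedFDerivWithin_sum_apply (i := k) hU.uniqueDiffOn (hKU hx)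
      (fun i hi => ((hfs i hi ε hεmem) x (hKU hx)).of_le (by exact_mod_cast le_top))
    rwa [Finset.sum_fn] at this
  rw [heq]
  calc ‖∑ i ∈ t, iteratedFDerivWithin ℝ k (f i ε) U x‖
      ≤ ∑ i ∈ t, ‖iteratedFDerivWithin ℝ k (f i ε) U x‖ := norm_sum_le _ _
    _ ≤ ∑ _i ∈ t, C * ε ^ m := Finset.sum_le_sum fun i hi => hb ε hε hεlt i hi x hx
    _ = t.card * (C * ε ^ m) := by rw [Finset.sum_const, nsmul_eq_mul]
    _ ≤ (t.card + 1) * C * ε ^ m := by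
        have h1 : (0:ℝ) ≤ C * ε ^ m := by positivity
        nlinarith [h1]

/-! ### Components of tensor nets -/

/-- Evaluation of a tensor at a pair of multi-indices, as a continuous linear map. -/
def projT (n r s : ℕ) (i : Fin r → Fin n) (j : Fin s → Fin n) : Tens n r s →L[ℝ] ℝ :=
  (ContinuousLinearMap.proj j).comp
    (ContinuousLinearMap.proj (R := ℝ) (φ := fun _ : Fin r → Fin n => (Fin s → Fin n) → ℝ) i)

lemma comp_deriv {n r s : ℕ} {U : Set (Rn n)} (hU : IsOpen U) {F : Rn n → Tens n r s}
    (hF : ContDiffOn ℝ (⊤ : ℕ∞) F U) {x : Rn n} (hx : x ∈ U) (k : ℕ)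
    (i : Fin r → Fin n) (j : Fin s → Fin n) (v : Fin k → Rn n) :
    iteratedFDerivWithin ℝ k (fun y => F y i j) U x v =
      iteratedFDerivWithin ℝ k F U x v i j := by
  have h := (projT n r s i j).iteratedFDerivWithin_comp_left (hF x hx) hU.uniqueDiffOn hx
    ((by exact_mod_cast le_top) : (k : WithTop ℕ∞) ≤ ((⊤ : ℕ∞) : WithTop ℕ∞))
  have h2 : (fun y => F y i j) = (projT n r s i j) ∘ F := rfl
  rw [h2, h]
  rfl

lemma comp_smooth {n r s : ℕ} {U : Set (Rn n)} {F : Rn n → Tens n r s}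
    (hF : ContDiffOn ℝ (⊤ : ℕ∞) F U) (i : Fin r → Fin n) (j : Fin s → Fin n) :
    ContDiffOn ℝ (⊤ : ℕ∞) (fun y => F y i j) U :=
  (projT n r s i j).contDiff.comp_contDiffOn hF

lemma moderate_comp_iff {n r s : ℕ} {U : Set (Rn n)} (hU : IsOpen U)
    {T : ℝ → Rn n → Tens n r s}
    (hT : ∀ ε ∈ Ioc (0:ℝ) 1, ContDiffOn ℝ (⊤ : ℕ∞) (T ε) U) :
    Moderate U T ↔ ∀ i j, Moderate U (fun ε x => T ε x i j) := by
  constructor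
  · intro h i j K hK hKU k
    obtain ⟨N, C, hC, ε₀, hε₀, hb⟩ := h K hK hKU k
    refine ⟨N, C, hC, min ε₀ 1, lt_min hε₀ one_pos, ?_⟩
    intro ε hε hεlt x hx
    have hεmem : ε ∈ Ioc (0:ℝ) 1 := ⟨hε, (lt_of_lt_of_le hεlt (min_le_right _ _)).le⟩
    have hb' := hb ε hε (lt_of_lt_of_le hεlt (min_le_left _ _)) x hx
    have hC' : (0:ℝ) ≤ C / ε ^ N := le_trans (norm_nonneg _) hb'
    refine (ContinuousMultilinearMap.opNorm_le_iff hC').2 fun v => ?_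
    rw [comp_deriv hU (hT ε hεmem) (hKU hx) k i j v]
    calc ‖iteratedFDerivWithin ℝ k (T ε) U x v i j‖
        ≤ ‖iteratedFDerivWithin ℝ k (T ε) U x v i‖ := norm_le_pi_norm _ j
      _ ≤ ‖iteratedFDerivWithin ℝ k (T ε) U x v‖ := norm_le_pi_norm _ i
      _ ≤ ‖iteratedFDerivWithin ℝ k (T ε) U x‖ * ∏ a, ‖v a‖ :=
          ContinuousMultilinearMap.le_opNorm _ _
      _ ≤ (C / ε ^ N) * ∏ a, ‖v a‖ :=
          mul_le_mul_of_nonneg_right hb' (Finset.prod_nonneg fun a _ => norm_nonneg _)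
  · intro h K hK hKU k
    obtain ⟨N, C, hC, ε₀, hε₀, hε₁, hb⟩ :=
      unif_mod (Finset.univ : Finset ((Fin r → Fin n) × (Fin s → Fin n)))
        (fun p ε b => ∀ x ∈ K, ‖iteratedFDerivWithin ℝ k (fun y => T ε y p.1 p.2) U x‖ ≤ b)
        (fun p _ ε b b' hbb hP x hx => (hP x hx).trans hbb)
        (fun p _ => h p.1 p.2 K hK hKU k)
    refine ⟨N, C, hC, ε₀, hε₀, ?_⟩
    intro ε hε hεlt x hx
    have hεmem : ε ∈ Ioc (0:ℝ) 1 := ⟨hε, (lt_of_lt_of_le hεlt hε₁).le⟩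
    have hC' : (0:ℝ) ≤ C / ε ^ N := by positivity
    refine (ContinuousMultilinearMap.opNorm_le_iff hC').2 fun v => ?_
    have hprod : (0:ℝ) ≤ (C / ε ^ N) * ∏ a, ‖v a‖ := by
      exact mul_nonneg hC' (Finset.prod_nonneg fun a _ => norm_nonneg _)
    refine (pi_norm_le_iff_of_nonneg hprod).2 fun i => ?_
    refine (pi_norm_le_iff_of_nonneg hprod).2 fun j => ?_
    rw [← comp_deriv hU (hT ε hεmem) (hKU hx) k i j v]
    calc ‖iteratedFDerivWithin ℝ k (fun y => T ε y i j) U x v‖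
        ≤ ‖iteratedFDerivWithin ℝ k (fun y => T ε y i j) U x‖ * ∏ a, ‖v a‖ :=
          ContinuousMultilinearMap.le_opNorm _ _
      _ ≤ (C / ε ^ N) * ∏ a, ‖v a‖ :=
          mul_le_mul_of_nonneg_right (hb ε hε hεlt (i, j) (Finset.mem_univ _) x hx)
            (Finset.prod_nonneg fun a _ => norm_nonneg _)

lemma negligible_comp_iff {n r s : ℕ} {U : Set (Rn n)} (hU : IsOpen U)
    {T : ℝ → Rn n → Tens n r s}
    (hT : ∀ ε ∈ Ioc (0:ℝ) 1, ContDiffOn ℝ (⊤ : ℕ∞) (T ε) U) :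
    Negligible U T ↔ ∀ i j, Negligible U (fun ε x => T ε x i j) := by
  constructor
  · intro h i j K hK hKU k m
    obtain ⟨C, hC, ε₀, hε₀, hb⟩ := h K hK hKU k m
    refine ⟨C, hC, min ε₀ 1, lt_min hε₀ one_pos, ?_⟩
    intro ε hε hεlt x hx
    have hεmem : ε ∈ Ioc (0:ℝ) 1 := ⟨hε, (lt_of_lt_of_le hεlt (min_le_right _ _)).le⟩
    have hb' := hb ε hε (lt_of_lt_of_le hεlt (min_le_left _ _)) x hx
    have hC' : (0:ℝ) ≤ C * ε ^ m := le_trans (norm_nonneg _) hb'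
    refine (ContinuousMultilinearMap.opNorm_le_iff hC').2 fun v => ?_
    rw [comp_deriv hU (hT ε hεmem) (hKU hx) k i j v]
    calc ‖iteratedFDerivWithin ℝ k (T ε) U x v i j‖
        ≤ ‖iteratedFDerivWithin ℝ k (T ε) U x v i‖ := norm_le_pi_norm _ j
      _ ≤ ‖iteratedFDerivWithin ℝ k (T ε) U x v‖ := norm_le_pi_norm _ i
      _ ≤ ‖iteratedFDerivWithin ℝ k (T ε) U x‖ * ∏ a, ‖v a‖ :=
          ContinuousMultilinearMap.le_opNorm _ _
      _ ≤ (C * ε ^ m) * ∏ a, ‖v a‖ :=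
          mul_le_mul_of_nonneg_right hb' (Finset.prod_nonneg fun a _ => norm_nonneg _)
  · intro h K hK hKU k m
    obtain ⟨C, hC, ε₀, hε₀, hε₁, hb⟩ :=
      unif_neg (Finset.univ : Finset ((Fin r → Fin n) × (Fin s → Fin n))) m
        (fun p ε b => ∀ x ∈ K, ‖iteratedFDerivWithin ℝ k (fun y => T ε y p.1 p.2) U x‖ ≤ b)
        (fun p _ ε b b' hbb hP x hx => (hP x hx).trans hbb)
        (fun p _ => h p.1 p.2 K hK hKU k m)
    refine ⟨C, hC, ε₀, hε₀, ?_⟩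
    intro ε hε hεlt x hx
    have hεmem : ε ∈ Ioc (0:ℝ) 1 := ⟨hε, (lt_of_lt_of_le hεlt hε₁).le⟩
    have hC' : (0:ℝ) ≤ C * ε ^ m := by positivity
    refine (ContinuousMultilinearMap.opNorm_le_iff hC').2 fun v => ?_
    have hprod : (0:ℝ) ≤ (C * ε ^ m) * ∏ a, ‖v a‖ :=
      mul_nonneg hC' (Finset.prod_nonneg fun a _ => norm_nonneg _)
    refine (pi_norm_le_iff_of_nonneg hprod).2 fun i => ?_
    refine (pi_norm_le_iff_of_nonneg hprod).2 fun j => ?_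
    rw [← comp_deriv hU (hT ε hεmem) (hKU hx) k i j v]
    calc ‖iteratedFDerivWithin ℝ k (fun y => T ε y i j) U x v‖
        ≤ ‖iteratedFDerivWithin ℝ k (fun y => T ε y i j) U x‖ * ∏ a, ‖v a‖ :=
          ContinuousMultilinearMap.le_opNorm _ _
      _ ≤ (C * ε ^ m) * ∏ a, ‖v a‖ :=
          mul_le_mul_of_nonneg_right (hb ε hε hεlt (i, j) (Finset.mem_univ _) x hx)
            (Finset.prod_nonneg fun a _ => norm_nonneg _)

/-! ### Algebraic identities for `contractScalar` -/

lemma contract_repr {n r s : ℕ} (T : ℝ → Rn n → Tens n r s)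
    (θ : Fin r → Rn n → Rn n) (X : Fin s → Rn n → Rn n) :
    contractScalar T θ X = fun ε x => ∑ p : (Fin r → Fin n) × (Fin s → Fin n),
      T ε x p.1 p.2 * ((∏ k : Fin r, θ k x (p.1 k)) * (∏ k : Fin s, X k x (p.2 k))) := by
  funext ε x
  rw [contractScalar, Fintype.sum_prod_type]
  exact Finset.sum_congr rfl fun i _ => Finset.sum_congr rfl fun j _ => (mul_assoc _ _ _)

lemma contract_single {n r s : ℕ} (T : ℝ → Rn n → Tens n r s)
    (i : Fin r → Fin n) (j : Fin s → Fin n) :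
    contractScalar T (fun k _ => Pi.single (i k) 1) (fun k _ => Pi.single (j k) 1)
      = fun ε x => T ε x i j := by
  funext ε x
  rw [contractScalar]
  rw [Finset.sum_eq_single i]
  · rw [Finset.sum_eq_single j]
    · simp
    · intro b _ hb
      have hb' : ¬ ∀ k, b k = j k := fun hc => hb (funext hc)
      simp only [Pi.single_apply, Fintype.prod_boole]
      simp [hb']
    · intro hmem; exact absurd (Finset.mem_univ j) hmem
  · intro b _ hb
    have hb' : ¬ ∀ k, b k = i k := fun hc => hb (funext hc)
    simp only [Pi.single_apply, Fintype.prod_boole]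
    simp [hb']
  · intro hmem; exact absurd (Finset.mem_univ i) hmem

/-! ### Main theorem -/

theorem saturation_tensor_estimates {n r s : ℕ}
    (U : Set (Rn n)) (hU : IsOpen U)
    (T : ℝ → Rn n → Tens n r s)
    (hT : ∀ ε ∈ Ioc (0:ℝ) 1, ContDiffOn ℝ (⊤ : ℕ∞) (T ε) U) :
    (Moderate U T ↔
      ∀ (θ : Fin r → Rn n → Rn n) (X : Fin s → Rn n → Rn n),
        (∀ i, ContDiffOn ℝ (⊤ : ℕ∞) (θ i) U) → (∀ j, ContDiffOn ℝ (⊤ : ℕ∞) (X j) U) →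
        Moderate U (contractScalar T θ X)) ∧
    (Negligible U T ↔
      ∀ (θ : Fin r → Rn n → Rn n) (X : Fin s → Rn n → Rn n),
        (∀ i, ContDiffOn ℝ (⊤ : ℕ∞) (θ i) U) → (∀ j, ContDiffOn ℝ (⊤ : ℕ∞) (X j) U) →
        Negligible U (contractScalar T θ X)) := by
  have hTs : ∀ (i : Fin r → Fin n) (j : Fin s → Fin n), ∀ ε ∈ Ioc (0:ℝ) 1,
      ContDiffOn ℝ (⊤ : ℕ∞) (fun y => T ε y i j) U := fun i j ε hε => comp_smooth (hT ε hε) i j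
  have hgsm : ∀ (θ : Fin r → Rn n → Rn n) (X : Fin s → Rn n → Rn n),
      (∀ i, ContDiffOn ℝ (⊤ : ℕ∞) (θ i) U) → (∀ j, ContDiffOn ℝ (⊤ : ℕ∞) (X j) U) →
      ∀ p : (Fin r → Fin n) × (Fin s → Fin n),
        ContDiffOn ℝ (⊤ : ℕ∞) (fun x => (∏ k : Fin r, θ k x (p.1 k)) *
          (∏ k : Fin s, X k x (p.2 k))) U := by
    intro θ X hθ hX p
    refine ContDiffOn.mul ?_ ?_
    · exact contDiffOn_prod fun k _ =>
        (ContinuousLinearMap.proj (R := ℝ) (φ := fun _ : Fin n => ℝ)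
          (p.1 k)).contDiff.comp_contDiffOn (hθ k)
    · exact contDiffOn_prod fun k _ =>
        (ContinuousLinearMap.proj (R := ℝ) (φ := fun _ : Fin n => ℝ)
          (p.2 k)).contDiff.comp_contDiffOn (hX k)
  constructor
  · constructor
    · intro hM θ X hθ hX
      rw [contract_repr]
      refine Moderate.fin_sum hU Finset.univ ?_ ?_
      · intro p _ ε hε
        exact (hTs p.1 p.2 ε hε).mul (hgsm θ X hθ hX p)
      · intro p _
        exact Moderate.mul_smooth hU (hTs p.1 p.2)
          ((moderate_comp_iff hU hT).1 hM p.1 p.2) (hgsm θ X hθ hX p)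
    · intro h
      refine (moderate_comp_iff hU hT).2 fun i j => ?_
      rw [← contract_single T i j]
      exact h _ _ (fun _ => contDiffOn_const) (fun _ => contDiffOn_const)
  · constructor
    · intro hM θ X hθ hX
      rw [contract_repr]
      refine Negligible.fin_sum hU Finset.univ ?_ ?_
      · intro p _ ε hε
        exact (hTs p.1 p.2 ε hε).mul (hgsm θ X hθ hX p)
      · intro p _
        exact Negligible.mul_smooth hU (hTs p.1 p.2)
          ((negligible_comp_iff hU hT).1 hM p.1 p.2) (hgsm θ X hθ hX p)
    · intro h
      refine (negligible_comp_iff hU hT).2 fun i j => ?_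
      rw [← contract_single T i j]
      exact h _ _ (fun _ => contDiffOn_const) (fun _ => contDiffOn_const)
end

section
/- Let g_ε be smooth metrics on ℝ² ∖ {0} (extending smoothly across 0) regularizing the cone metric with deficit angle 2π(1−A), with scalar curvatures R̃_ε satisfying the estimates |R̃_ε(x)| ≤ C/ε² for |x| < εR₀ and |R̃_ε(x)| ≤ Cε/|x|³ for |x| > εR₀, and with ∫_{ℝ²} R̃_ε √|g_ε| dx → 4π(1−A) as ε → 0 (e.g. by Gauss–Bonnet). Then for every smooth compactly supported function μ on ℝ², lim_{ε→0} ∫ R̃_ε(x) μ(x) √|g_ε(x)| dx = 4π(1−A) μ(0); i.e. the scalar curvature density converges distributionally to 4π(1−A) δ⁽²⁾. -/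
/- STATEMENT 18: Distributional limit of the regularized scalar curvature of the cone.
Let R̃_ε be the scalar curvatures of smooth metrics g_ε on ℝ² regularizing the cone
metric with deficit angle 2π(1−A), satisfying the two-regime estimates
|R̃_ε(x)| ≤ C/ε² for ‖x‖ < εR₀ and |R̃_ε(x)| ≤ Cε/‖x‖³ for ‖x‖ > εR₀, and whose area
densities s_ε = √|g_ε| are uniformly bounded, with total curvature
∫ R̃_ε s_ε → 4π(1−A) (Gauss–Bonnet).  Then for every smooth compactly supported μ,
∫ R̃_ε μ s_ε → 4π(1−A) μ(0), i.e. the curvature density converges distributionally to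
4π(1−A) δ⁽²⁾. -/

open MeasureTheory Filter Set Topology Real

abbrev E2 := EuclideanSpace ℝ (Fin 2)

lemma tail_integral (r : ℝ) (hr : 0 < r) :
    IntegrableOn (fun x : E2 => (‖x‖ ^ 3)⁻¹) {x : E2 | r ≤ ‖x‖} volume ∧
      ∫ x in {x : E2 | r ≤ ‖x‖}, (‖x‖ ^ 3)⁻¹ =
        2 * (volume (Metric.ball (0 : E2) 1)).toReal * r⁻¹ := by
  have hmeas : MeasurableSet {x : E2 | r ≤ ‖x‖} :=
    (isClosed_le continuous_const continuous_norm).measurableSet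
  have hint1 : Integrable (fun x : E2 => (1 + ‖x‖) ^ (-(3:ℝ))) := by
    apply integrable_one_add_norm
    rw [finrank_euclideanSpace_fin]; norm_num
  have hInt : IntegrableOn (fun x : E2 => (‖x‖ ^ 3)⁻¹) {x : E2 | r ≤ ‖x‖} := by
    apply ((hint1.const_mul ((1 + 1/r)^3)).integrableOn).mono'
      ((measurable_norm.pow_const 3).inv).aestronglyMeasurable
    filter_upwards [ae_restrict_mem hmeas] with x hx
    have hx0 : 0 < ‖x‖ := hr.trans_le hx
    have h1 : (1 + ‖x‖) ^ (-(3:ℝ)) = ((1 + ‖x‖)^3)⁻¹ := by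
      rw [Real.rpow_neg (by positivity), show ((3:ℝ) = (3:ℕ)) by norm_num,
        Real.rpow_natCast]
    have hb : (0:ℝ) < (1+‖x‖)^3 := by positivity
    have hxx : (0:ℝ) < ‖x‖^3 := by positivity
    simp only [Pi.inv_apply]
    rw [Real.norm_eq_abs, abs_of_nonneg (by positivity : (0:ℝ) ≤ (‖x‖^3)⁻¹), h1, ← one_div, ← div_eq_mul_inv,
      div_le_div_iff₀ hxx hb]
    have key : (1 + ‖x‖) ^ 3 ≤ ((1+1/r) * ‖x‖)^3 := by
      apply pow_le_pow_left₀ (by positivity)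
      have h2 : 1 ≤ ‖x‖/r := (one_le_div hr).2 hx
      have : (1:ℝ) + ‖x‖ ≤ ‖x‖/r + ‖x‖ := by linarith
      refine this.trans (le_of_eq ?_)
      field_simp; ring
    calc (1:ℝ) * (1+‖x‖)^3 = (1+‖x‖)^3 := one_mul _
      _ ≤ ((1+1/r)*‖x‖)^3 := key
      _ = (1+1/r)^3 * ‖x‖^3 := by ring
  refine ⟨hInt, ?_⟩
  have heq : (∫ x in {x : E2 | r ≤ ‖x‖}, (‖x‖^3)⁻¹) =
      ∫ x : E2, (fun y : ℝ => indicator (Ici r) (fun y => (y^3)⁻¹) y) ‖x‖ := by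
    rw [← integral_indicator hmeas]
    apply integral_congr_ae
    apply Eventually.of_forall
    intro x
    by_cases h : r ≤ ‖x‖ <;> simp [indicator, h]
  rw [heq, integral_fun_norm_addHaar volume (fun y => indicator (Ici r) (fun y => (y^3)⁻¹) y)]
  have hdim : Module.finrank ℝ E2 = 2 := finrank_euclideanSpace_fin
  rw [hdim]
  have hinner : (∫ y in Ioi (0:ℝ), y ^ (2 - 1) • indicator (Ici r) (fun y => (y^3)⁻¹) y) = r⁻¹ := by
    have h1 : ∀ y : ℝ, y ^ (2-1) • indicator (Ici r) (fun y => (y^3)⁻¹) y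
        = indicator (Ici r) (fun y => y * (y^3)⁻¹) y := by
      intro y
      by_cases h : y ∈ Ici r <;> simp [indicator, h]
    simp_rw [h1]
    rw [integral_indicator measurableSet_Ici, Measure.restrict_restrict measurableSet_Ici,
      show Ici r ∩ Ioi 0 = Ici r from
        inter_eq_self_of_subset_left (fun y (hy : y ∈ Ici r) => hr.trans_le hy),
      integral_Ici_eq_integral_Ioi,
      setIntegral_congr_fun measurableSet_Ioi
        (g := fun y : ℝ => y ^ (-2 : ℝ)) (fun y hy => ?_),
      integral_Ioi_rpow_of_lt (by norm_num) hr]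
    · norm_num
      rw [Real.rpow_neg_one]
    · have hy0 : 0 < y := hr.trans hy
      show y * (y ^ 3)⁻¹ = y ^ (-2 : ℝ)
      rw [Real.rpow_neg hy0.le, show ((2:ℝ) = (2:ℕ)) by norm_num, Real.rpow_natCast]
      field_simp
  rw [hinner]
  simp [smul_eq_mul, measureReal_def]
  ring

set_option maxHeartbeats 2000000 in
theorem cone_curvature_associated_to_delta
    (A : ℝ) (hA0 : 0 < A) (hA1 : A < 1)
    (Rc : ℝ → E2 → ℝ)   -- the scalar curvatures R̃_ε
    (s : ℝ → E2 → ℝ)    -- the area densities √|det g_ε|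
    (hRcont : ∀ ε ∈ Ioc (0:ℝ) 1, Continuous (Rc ε))
    (hscont : ∀ ε ∈ Ioc (0:ℝ) 1, Continuous (s ε))
    (C R₀ : ℝ) (hC : 0 < C) (hR₀ : 0 < R₀)
    -- inner estimate |R̃_ε| ≤ C/ε² for ‖x‖ < εR₀
    (hin : ∀ ε ∈ Ioc (0:ℝ) 1, ∀ x : E2, ‖x‖ < ε * R₀ → |Rc ε x| ≤ C / ε ^ 2)
    -- outer estimate |R̃_ε| ≤ Cε/‖x‖³ for ‖x‖ > εR₀
    (hout : ∀ ε ∈ Ioc (0:ℝ) 1, ∀ x : E2, ε * R₀ < ‖x‖ → |Rc ε x| ≤ C * ε / ‖x‖ ^ 3)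
    -- uniform bound on the densities
    (hsbd : ∃ Cs > (0:ℝ), ∀ ε ∈ Ioc (0:ℝ) 1, ∀ x : E2, |s ε x| ≤ Cs)
    -- integrability of the curvature density
    (hint : ∀ ε ∈ Ioc (0:ℝ) 1, Integrable (fun x : E2 => Rc ε x * s ε x))
    -- total curvature (Gauss–Bonnet): ∫ R̃_ε √|g_ε| → 4π(1−A)
    (htot : Tendsto (fun ε => ∫ x : E2, Rc ε x * s ε x)
      (nhdsWithin 0 (Ioi 0)) (nhds (4 * π * (1 - A)))) :
    ∀ μ : E2 → ℝ, ContDiff ℝ (⊤ : ℕ∞) μ → HasCompactSupport μ →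
      Tendsto (fun ε => ∫ x : E2, Rc ε x * μ x * s ε x)
        (nhdsWithin 0 (Ioi 0)) (nhds (4 * π * (1 - A) * μ 0)) := by
  intro μ hμ hcs
  obtain ⟨Cs, hCs0, hCs⟩ := hsbd
  obtain ⟨M0, hM0⟩ := hcs.exists_bound_of_continuous hμ.continuous
  set Mb : ℝ := 2 * (|M0| + 1) with hMbdef
  have hMb0 : 0 < Mb := by positivity
  have hMbd : ∀ x : E2, |μ x - μ 0| ≤ Mb := by
    intro x
    have h1 := hM0 x; have h2 := hM0 0
    rw [Real.norm_eq_abs] at h1 h2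
    have h3 : M0 ≤ |M0| := le_abs_self M0
    have h4 : |μ x - μ 0| ≤ |μ x| + |μ 0| := by
      have := abs_add_le (μ x) (-(μ 0)); simpa [sub_eq_add_neg] using this
    rw [hMbdef]; linarith
  set v₁ : ℝ := (volume (Metric.ball (0:E2) 1)).toReal with hv₁
  have hv₁0 : 0 ≤ v₁ := ENNReal.toReal_nonneg
  set c₀ : ℝ := 2 * v₁ with hc₀
  have hc₀0 : 0 ≤ c₀ := by rw [hc₀]; positivity
  set X : ℝ := Cs * C * (R₀^2 * v₁ + c₀ / R₀) with hX
  have hX0 : 0 ≤ X := by rw [hX]; positivity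
  set Y : ℝ := Cs * C * Mb * c₀ with hY
  have hY0 : 0 ≤ Y := by rw [hY]; positivity
  clear_value Mb v₁ c₀ X Y
  have key : Tendsto (fun ε => (∫ x : E2, Rc ε x * μ x * s ε x) - μ 0 * ∫ x : E2, Rc ε x * s ε x)
      (nhdsWithin 0 (Ioi 0)) (nhds 0) := by
    rw [Metric.tendsto_nhdsWithin_nhds]
    intro η hη
    set η' : ℝ := η / (2 * (X + 1)) with hη'
    have hη'0 : 0 < η' := by rw [hη']; positivity
    clear_value η'
    obtain ⟨δ', hδ'0, hδ'⟩ := Metric.continuousAt_iff.1 (hμ.continuous.continuousAt (x := (0:E2))) η' hη'0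
    set δ : ℝ := δ' / 2 with hδdef
    have hδ0 : 0 < δ := by rw [hδdef]; positivity
    clear_value δ
    have hδ : ∀ x : E2, ‖x‖ ≤ δ → |μ x - μ 0| ≤ η' := by
      intro x hx
      have hxd : dist x 0 < δ' := by
        rw [dist_zero_right]
        rw [hδdef] at hx
        linarith
      exact le_of_lt (by simpa [Real.dist_eq] using hδ' hxd)
    refine ⟨min (min 1 (δ / R₀)) (δ * η / (2 * (Y + 1))), by positivity, ?_⟩
    intro ε hε hεd
    have hε0 : 0 < ε := hε
    rw [Real.dist_eq, sub_zero, abs_of_pos hε0] at hεd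
    have hε1 : ε ≤ 1 := le_of_lt (lt_of_lt_of_le hεd ((min_le_left _ _).trans (min_le_left _ _)))
    have hεδ : ε * R₀ ≤ δ := by
      have h5 : ε < δ / R₀ := lt_of_lt_of_le hεd ((min_le_left _ _).trans (min_le_right _ _))
      have := (lt_div_iff₀ hR₀).1 h5
      linarith
    have hεY : ε < δ * η / (2 * (Y + 1)) := lt_of_lt_of_le hεd (min_le_right _ _)
    have hεmem : ε ∈ Ioc (0:ℝ) 1 := ⟨hε0, hε1⟩
    have hr0 : 0 < ε * R₀ := by positivity
    set f : E2 → ℝ := fun x => Rc ε x * (μ x - μ 0) * s ε x with hf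
    have hRs := hint ε hεmem
    have hfi : Integrable f := by
      have hfe : f = fun x => (μ x - μ 0) * (Rc ε x * s ε x) := by funext x; rw [hf]; ring
      rw [hfe]
      exact hRs.bdd_mul ((hμ.continuous.sub continuous_const).aestronglyMeasurable)
        (Eventually.of_forall fun x => by rw [Real.norm_eq_abs]; exact hMbd x)
    have hμi : Integrable (fun x : E2 => Rc ε x * μ x * s ε x) := by
      have he : (fun x : E2 => Rc ε x * μ x * s ε x) = fun x => μ x * (Rc ε x * s ε x) := by
        funext x; ring
      rw [he]
      exact hRs.bdd_mul hμ.continuous.aestronglyMeasurable (Eventually.of_forall hM0)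
    have hDe : (∫ x : E2, Rc ε x * μ x * s ε x) - μ 0 * ∫ x : E2, Rc ε x * s ε x = ∫ x, f x := by
      rw [← integral_const_mul, ← integral_sub hμi (hRs.const_mul (μ 0))]
      apply integral_congr_ae
      apply Eventually.of_forall
      intro x
      rw [hf]; ring
    rw [dist_zero_right, Real.norm_eq_abs, hDe]
    have hfin : Integrable (fun x => |f x|) := hfi.abs
    have hI1 : |∫ x, f x| ≤ ∫ x, |f x| := by
      simpa [Real.norm_eq_abs] using norm_integral_le_integral_norm f
    -- sets
    set B := Metric.ball (0:E2) (ε * R₀) with hB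
    set Sp := Metric.sphere (0:E2) (ε * R₀) with hSp
    set T₁ := {x : E2 | ε * R₀ < ‖x‖ ∧ ‖x‖ ≤ δ} with hT₁def
    set T₂ := {x : E2 | δ < ‖x‖} with hT₂def
    have hT₁m : MeasurableSet T₁ := by
      rw [hT₁def]
      exact (measurableSet_lt measurable_const measurable_norm).inter
        (measurableSet_le measurable_norm measurable_const)
    have hT₂m : MeasurableSet T₂ := (measurableSet_lt measurable_const measurable_norm)
    have hcompl : Bᶜ = Sp ∪ (T₁ ∪ T₂) := by
      ext x
      simp only [hB, hSp, hT₁def, hT₂def, mem_compl_iff, Metric.mem_ball, dist_zero_right,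
        not_lt, mem_union, mem_sphere_zero_iff_norm, mem_setOf_eq]
      constructor
      · intro h
        rcases eq_or_lt_of_le h with h' | h'
        · exact Or.inl h'.symm
        · rcases le_or_gt ‖x‖ δ with h2 | h2
          · exact Or.inr (Or.inl ⟨h', h2⟩)
          · exact Or.inr (Or.inr h2)
      · rintro (h | ⟨h, -⟩ | h)
        · exact h.ge
        · exact h.le
        · linarith
    have hSp0 : ∫ x in Sp, |f x| = 0 := by
      have h0 : volume Sp = 0 := Measure.addHaar_sphere volume 0 (ε * R₀)
      rw [Measure.restrict_eq_zero.2 h0, integral_zero_measure]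
    have hdisj1 : Disjoint Sp (T₁ ∪ T₂) := by
      rw [Set.disjoint_left]
      intro x hx hx2
      rw [hSp, mem_sphere_zero_iff_norm] at hx
      rcases hx2 with ⟨h, -⟩ | h
      · rw [hT₁def] at *; exact absurd hx (ne_of_gt h)
      · rw [hT₂def] at h; simp only [mem_setOf_eq] at h; linarith
    have hdisj2 : Disjoint T₁ T₂ := by
      rw [Set.disjoint_left]
      rintro x ⟨-, h2⟩ h
      rw [hT₂def] at h; simp only [mem_setOf_eq] at h; linarith
    have hsplit1 := integral_add_compl (s := B) Metric.isOpen_ball.measurableSet hfin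
    have hsplit2 : ∫ x in Bᶜ, |f x| =
        (∫ x in Sp, |f x|) + ((∫ x in T₁, |f x|) + ∫ x in T₂, |f x|) := by
      have e1 : ∫ x in Sp ∪ (T₁ ∪ T₂), |f x| = (∫ x in Sp, |f x|) + ∫ x in T₁ ∪ T₂, |f x| :=
        setIntegral_union hdisj1 (hT₁m.union hT₂m) hfin.integrableOn hfin.integrableOn
      have e2 : ∫ x in T₁ ∪ T₂, |f x| = (∫ x in T₁, |f x|) + ∫ x in T₂, |f x| :=
        setIntegral_union hdisj2 hT₂m hfin.integrableOn hfin.integrableOn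
      rw [hcompl, e1, e2]
    obtain ⟨hIr, hJr⟩ := tail_integral (ε * R₀) hr0
    obtain ⟨hIδ, hJδ⟩ := tail_integral δ hδ0
    rw [← hv₁] at hJr hJδ
    have hsub1 : T₁ ⊆ {x : E2 | ε * R₀ ≤ ‖x‖} := fun x hx => le_of_lt hx.1
    have hsub2 : T₂ ⊆ {x : E2 | δ ≤ ‖x‖} := fun x hx => show δ ≤ ‖x‖ from le_of_lt (show δ < ‖x‖ from hx)
    have habsf : ∀ x, |f x| = |Rc ε x| * |μ x - μ 0| * |s ε x| := by
      intro x; rw [hf]; simp only [abs_mul]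
    -- ball piece
    have hball : ∫ x in B, |f x| ≤ Cs * C * η' * (R₀^2 * v₁) := by
      have hbd : ∀ x ∈ B, |f x| ≤ C / ε^2 * η' * Cs := by
        intro x hx
        rw [hB, Metric.mem_ball, dist_zero_right] at hx
        have h1 := hin ε hεmem x hx
        have h2 : |μ x - μ 0| ≤ η' := hδ x (le_trans hx.le hεδ)
        have h3 := hCs ε hεmem x
        rw [habsf x]
        have hC2 : (0:ℝ) ≤ C / ε ^ 2 := by positivity
        exact mul_le_mul (mul_le_mul h1 h2 (abs_nonneg _) hC2) h3 (abs_nonneg _) (by positivity)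
      calc ∫ x in B, |f x| ≤ ∫ _x in B, (C / ε^2 * η' * Cs) :=
            setIntegral_mono_on hfin.integrableOn
              (integrableOn_const measure_ball_lt_top.ne)
              Metric.isOpen_ball.measurableSet hbd
        _ = (volume B).toReal * (C / ε^2 * η' * Cs) := by
              rw [setIntegral_const, smul_eq_mul, measureReal_def]
        _ = ((ε * R₀)^2 * v₁) * (C / ε^2 * η' * Cs) := by
              rw [hB, Measure.addHaar_ball volume _ hr0.le, ENNReal.toReal_mul,
                ENNReal.toReal_ofReal (by positivity), finrank_euclideanSpace_fin, ← hv₁]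
        _ = Cs * C * η' * (R₀^2 * v₁) := by field_simp
    -- T₁ piece
    have hT₁b : ∫ x in T₁, |f x| ≤ Cs * C * η' * (c₀ / R₀) := by
      have hbd : ∀ x ∈ T₁, |f x| ≤ (Cs * C * ε * η') * (‖x‖^3)⁻¹ := by
        rintro x ⟨hx1, hx2⟩
        have h1 := hout ε hεmem x hx1
        have h2 : |μ x - μ 0| ≤ η' := hδ x hx2
        have h3 := hCs ε hεmem x
        have hx0 : (0:ℝ) < ‖x‖ := lt_trans hr0 hx1
        rw [habsf x]
        have hb1 : (0:ℝ) ≤ C * ε / ‖x‖^3 := by positivity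
        calc |Rc ε x| * |μ x - μ 0| * |s ε x| ≤ (C * ε / ‖x‖^3) * η' * Cs :=
              mul_le_mul (mul_le_mul h1 h2 (abs_nonneg _) hb1) h3 (abs_nonneg _) (by positivity)
          _ = (Cs * C * ε * η') * (‖x‖^3)⁻¹ := by field_simp
      calc ∫ x in T₁, |f x| ≤ ∫ x in T₁, (Cs * C * ε * η') * (‖x‖^3)⁻¹ :=
            setIntegral_mono_on hfin.integrableOn
              ((hIr.mono_set hsub1).const_mul _) hT₁m hbd
        _ ≤ ∫ x in {x : E2 | ε * R₀ ≤ ‖x‖}, (Cs * C * ε * η') * (‖x‖^3)⁻¹ :=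
            setIntegral_mono_set (hIr.const_mul _)
              (Eventually.of_forall fun x => by positivity)
              (HasSubset.Subset.eventuallyLE hsub1)
        _ = (Cs * C * ε * η') * (2 * v₁ * (ε * R₀)⁻¹) := by
              rw [integral_const_mul, hJr]
        _ = Cs * C * η' * (c₀ / R₀) := by rw [hc₀]; field_simp
    -- T₂ piece
    have hT₂b : ∫ x in T₂, |f x| ≤ ε * (Y / δ) := by
      have hbd : ∀ x ∈ T₂, |f x| ≤ (Cs * C * ε * Mb) * (‖x‖^3)⁻¹ := by
        intro x hx
        rw [hT₂def] at hx; simp only [mem_setOf_eq] at hx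
        have h1 := hout ε hεmem x (lt_of_le_of_lt hεδ hx)
        have h2 := hMbd x
        have h3 := hCs ε hεmem x
        have hx0 : (0:ℝ) < ‖x‖ := lt_trans hδ0 hx
        rw [habsf x]
        have hb1 : (0:ℝ) ≤ C * ε / ‖x‖^3 := by positivity
        calc |Rc ε x| * |μ x - μ 0| * |s ε x| ≤ (C * ε / ‖x‖^3) * Mb * Cs :=
              mul_le_mul (mul_le_mul h1 h2 (abs_nonneg _) hb1) h3 (abs_nonneg _) (by positivity)
          _ = (Cs * C * ε * Mb) * (‖x‖^3)⁻¹ := by field_simp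
      calc ∫ x in T₂, |f x| ≤ ∫ x in T₂, (Cs * C * ε * Mb) * (‖x‖^3)⁻¹ :=
            setIntegral_mono_on hfin.integrableOn
              ((hIδ.mono_set hsub2).const_mul _) hT₂m hbd
        _ ≤ ∫ x in {x : E2 | δ ≤ ‖x‖}, (Cs * C * ε * Mb) * (‖x‖^3)⁻¹ :=
            setIntegral_mono_set (hIδ.const_mul _)
              (Eventually.of_forall fun x => by positivity)
              (HasSubset.Subset.eventuallyLE hsub2)
        _ = (Cs * C * ε * Mb) * (2 * v₁ * δ⁻¹) := by
              rw [integral_const_mul, hJδ]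
        _ = ε * (Y / δ) := by rw [hY, hc₀]; field_simp
    have hXe : η' * X + ε * (Y / δ) =
        Cs * C * η' * (R₀^2 * v₁) + Cs * C * η' * (c₀ / R₀) + ε * (Y / δ) := by
      rw [hX]; ring
    have htotal : ∫ x, |f x| ≤ η' * X + ε * (Y / δ) := by
      rw [← hsplit1, hsplit2, hSp0, hXe]
      linarith
    have hA : η' * X < η / 2 := by
      rw [hη', div_mul_eq_mul_div, div_lt_div_iff₀ (by positivity) (by norm_num : (0:ℝ) < 2)]
      nlinarith
    have hB2 : ε * (Y / δ) < η / 2 := by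
      have hYd : (0:ℝ) ≤ Y / δ := by positivity
      calc ε * (Y / δ) ≤ (δ * η / (2 * (Y + 1))) * (Y / δ) :=
            mul_le_mul_of_nonneg_right hεY.le hYd
        _ = η * Y / (2 * (Y + 1)) := by field_simp
        _ < η / 2 := by
            rw [div_lt_div_iff₀ (by positivity) (by norm_num : (0:ℝ) < 2)]
            nlinarith
    calc |∫ x, f x| ≤ ∫ x, |f x| := hI1
      _ ≤ η' * X + ε * (Y / δ) := htotal
      _ < η := by linarith
  have hcomb := key.add (htot.const_mul (μ 0))
  rw [zero_add] at hcomb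
  have heq : (fun ε => ((∫ x : E2, Rc ε x * μ x * s ε x) - μ 0 * ∫ x : E2, Rc ε x * s ε x)
      + μ 0 * ∫ x : E2, Rc ε x * s ε x) = fun ε => ∫ x : E2, Rc ε x * μ x * s ε x := by
    funext ε; ring
  rw [heq] at hcomb
  rw [show 4 * π * (1 - A) * μ 0 = μ 0 * (4 * π * (1 - A)) by ring]
  exact hcomb
end
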